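/- Let k ≥ 1 and n ≥ 1 be natural numbers, let G_n = {(j₁/n, …, j_k/n) : jᵢ ∈ {0,1,…,n}} ⊂ [0,1]^k be the uniform grid with spacing 1/n, and let ω be a modulus of continuity. Define φ : [0,1]^k → ℝ by φ(t) = ω(dist(t, G_n)), where dist(t, G_n) = min_{p∈G_n} ‖t − p‖₂. Then: (i) φ ∈ X_ω, i.e., |φ(t) − φ(s)| ≤ ω(‖t − s‖₂) for all t, s ∈ [0,1]^k; (ii) φ vanishes at every point of G_n; and (iii) sup_{t ∈ [0,1]^k} |φ(t)| = ω(√k/(2n)). -/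

import Mathlib

noncomputable section

/-- The unit cube $[0,1]^k$ in $\mathbb{R}^k$ with the Euclidean norm. -/
def cube (k : ℕ) : Set (EuclideanSpace ℝ (Fin k)) :=
  {t | ∀ i, t i ∈ Set.Icc (0:ℝ) 1}

/-- The uniform grid with spacing $1/n$ in the unit cube. -/
def grid (k n : ℕ) : Set (EuclideanSpace ℝ (Fin k)) :=
  {p | ∀ i, ∃ j : ℕ, j ≤ n ∧ p i = (j : ℝ) / n}

/-- A modulus of continuity: `ω : [0,∞) → [0,∞)`, `ω 0 = 0`, nondecreasing,
continuous and subadditive (all conditions on `[0,∞)`). -/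
def IsModulus (ω : ℝ → ℝ) : Prop :=
  ω 0 = 0 ∧ (∀ h, 0 ≤ h → 0 ≤ ω h) ∧ (∀ a b, 0 ≤ a → a ≤ b → ω a ≤ ω b) ∧
  ContinuousOn ω (Set.Ici 0) ∧ ∀ a b, 0 ≤ a → 0 ≤ b → ω (a + b) ≤ ω a + ω b

/-- Membership in the class `X_ω` of functions on the unit cube admitting `ω`
as a modulus of continuity (w.r.t. the Euclidean norm). -/
def MemXomega (k : ℕ) (ω : ℝ → ℝ) (x : EuclideanSpace ℝ (Fin k) → ℝ) : Prop :=
  ∀ t ∈ cube k, ∀ s ∈ cube k, |x t - x s| ≤ ω (dist t s)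

/-! Since `infDist · G` is 1-Lipschitz and `ω` is monotone and subadditive, `ω ∘ infDist · G` has
modulus `ω`. Rounding each coordinate to the nearest multiple of `1/n` puts every point of the
cube within `√k/(2n)` of the grid, while the centre `(1/(2n), …, 1/(2n))` of the corner cell is
at least `1/(2n)` away from every grid point in each coordinate, so this distance is attained;
monotonicity of `ω` carries the maximum over to `φ`. -/

open Metric Set

namespace IsModulus

variable {ω : ℝ → ℝ}

lemma nonneg (hω : IsModulus ω) {h : ℝ} (h0 : 0 ≤ h) : 0 ≤ ω h :=
  hω.2.1 h h0

lemma monotoneOn (hω : IsModulus ω) : MonotoneOn ω (Ici 0) :=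
  fun a ha _ _ hab => hω.2.2.1 a _ ha hab

lemma sub_le_of_le_add (hω : IsModulus ω) {a b d : ℝ} (ha : 0 ≤ a) (hb : 0 ≤ b) (hd : 0 ≤ d)
    (habd : a ≤ b + d) : ω a - ω b ≤ ω d := by
  have := hω.2.2.2.2 b d hb hd
  linarith [hω.2.2.1 a _ ha habd]

lemma abs_sub_infDist_le {X : Type*} [PseudoMetricSpace X] (hω : IsModulus ω) (s : Set X)
    (x y : X) : |ω (infDist x s) - ω (infDist y s)| ≤ ω (dist x y) := by
  have key : ∀ x y : X, ω (infDist x s) - ω (infDist y s) ≤ ω (dist x y) := fun _ _ =>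
    hω.sub_le_of_le_add infDist_nonneg infDist_nonneg dist_nonneg infDist_le_infDist_add_dist
  exact abs_sub_le_iff.2 ⟨key x y, dist_comm x y ▸ key y x⟩

end IsModulus

namespace EuclideanSpace

variable {ι : Type*} [Fintype ι]

lemma dist_le_sqrt_card_mul {x y : EuclideanSpace ℝ ι} {r : ℝ} (hr : 0 ≤ r)
    (h : ∀ i, dist (x i) (y i) ≤ r) : dist x y ≤ √(Fintype.card ι) * r := by
  rw [EuclideanSpace.dist_eq, ← Real.sqrt_sq hr, ← Real.sqrt_mul (Nat.cast_nonneg _)]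
  refine Real.sqrt_le_sqrt ?_
  calc ∑ i, dist (x i) (y i) ^ 2 ≤ ∑ _i : ι, r ^ 2 :=
        Finset.sum_le_sum fun i _ => pow_le_pow_left₀ dist_nonneg (h i) 2
    _ = Fintype.card ι * r ^ 2 := by simp

lemma sqrt_card_mul_le_dist {x y : EuclideanSpace ℝ ι} {r : ℝ} (hr : 0 ≤ r)
    (h : ∀ i, r ≤ dist (x i) (y i)) : √(Fintype.card ι) * r ≤ dist x y := by
  rw [EuclideanSpace.dist_eq, ← Real.sqrt_sq hr, ← Real.sqrt_mul (Nat.cast_nonneg _)]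
  refine Real.sqrt_le_sqrt ?_
  calc (Fintype.card ι : ℝ) * r ^ 2 = ∑ _i : ι, r ^ 2 := by simp
    _ ≤ ∑ i, dist (x i) (y i) ^ 2 := Finset.sum_le_sum fun i _ => pow_le_pow_left₀ hr (h i) 2

end EuclideanSpace

lemma exists_abs_sub_nat_div_le {n : ℕ} (hn : 0 < n) {x : ℝ} (hx0 : 0 ≤ x) (hx1 : x ≤ 1) :
    ∃ j : ℕ, j ≤ n ∧ |x - j / n| ≤ 1 / (2 * n) := by
  have hN : (0 : ℝ) < n := by exact_mod_cast hn
  set j : ℕ := ⌊n * x + 1 / 2⌋₊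
  have hj_le : (j : ℝ) ≤ n * x + 1 / 2 := Nat.floor_le (by positivity)
  have hj_gt : n * x + 1 / 2 < j + 1 := Nat.lt_floor_add_one _
  refine ⟨j, ?_, ?_⟩
  · have : (j : ℝ) < n + 1 := by nlinarith
    exact_mod_cast Nat.lt_succ_iff.mp (by exact_mod_cast this)
  · have hround : |n * x - j| ≤ 1 / 2 := by rw [abs_le]; constructor <;> linarith
    rw [show x - j / n = (n * x - j) / n by field_simp, show 1 / (2 * (n : ℝ)) = 1 / 2 / n by ring,
      abs_div, abs_of_pos hN]
    gcongr

lemma half_div_le_abs_half_div_sub_nat_div (n j : ℕ) :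
    1 / (2 * n) ≤ |1 / (2 * n) - j / (n : ℝ)| := by
  rcases Nat.eq_zero_or_pos j with rfl | hj
  · simp
  · have hjn : 1 / (n : ℝ) ≤ j / n := by gcongr; exact_mod_cast hj
    have : 1 / (2 * (n : ℝ)) = 1 / n / 2 := by ring
    rw [abs_sub_comm, abs_of_nonneg (by linarith [show (0 : ℝ) ≤ 1 / n by positivity])]
    linarith

variable {k n : ℕ}

lemma zero_mem_grid : (0 : EuclideanSpace ℝ (Fin k)) ∈ grid k n :=
  fun _ => ⟨0, Nat.zero_le n, by simp⟩

lemma infDist_grid_le (hn : 0 < n) {t : EuclideanSpace ℝ (Fin k)} (ht : t ∈ cube k) :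
    infDist t (grid k n) ≤ √k / (2 * n) := by
  choose j hjn hjt using fun i => exists_abs_sub_nat_div_le hn (ht i).1 (ht i).2
  have hp : WithLp.toLp 2 (fun i => (j i : ℝ) / n) ∈ grid k n := fun i => ⟨j i, hjn i, rfl⟩
  calc infDist t (grid k n) ≤ dist t (WithLp.toLp 2 fun i => (j i : ℝ) / n) :=
        infDist_le_dist_of_mem hp
    _ ≤ √(Fintype.card (Fin k)) * (1 / (2 * n)) :=
        EuclideanSpace.dist_le_sqrt_card_mul (by positivity) hjt
    _ = √k / (2 * n) := by simp [div_eq_mul_inv]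

def gridCellCenter (k n : ℕ) : EuclideanSpace ℝ (Fin k) :=
  WithLp.toLp 2 fun _ => 1 / (2 * n)

lemma gridCellCenter_mem_cube (hn : 0 < n) : gridCellCenter k n ∈ cube k := by
  have : (1 : ℝ) ≤ n := by exact_mod_cast hn
  refine fun _ => ⟨by simp [gridCellCenter], ?_⟩
  simp only [gridCellCenter]
  rw [div_le_one (by positivity)]
  linarith

lemma le_infDist_gridCellCenter :
    √k / (2 * n) ≤ infDist (gridCellCenter k n) (grid k n) := by
  refine (le_infDist ⟨0, zero_mem_grid⟩).2 fun p hp => ?_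
  calc √k / (2 * n) = √(Fintype.card (Fin k)) * (1 / (2 * n)) := by simp [div_eq_mul_inv]
    _ ≤ dist (gridCellCenter k n) p := EuclideanSpace.sqrt_card_mul_le_dist (by positivity)
        fun i => by
          obtain ⟨j, -, hj⟩ := hp i
          simpa [gridCellCenter, Real.dist_eq, hj] using half_div_le_abs_half_div_sub_nat_div n j

lemma isGreatest_infDist_grid (hn : 0 < n) :
    IsGreatest ((infDist · (grid k n)) '' cube k) (√k / (2 * n)) :=
  ⟨⟨gridCellCenter k n, gridCellCenter_mem_cube hn,
      (infDist_grid_le hn (gridCellCenter_mem_cube hn)).antisymm le_infDist_gridCellCenter⟩,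
    forall_mem_image.2 fun _ => infDist_grid_le hn⟩

theorem extremal_function_properties_general
    (k n : ℕ) (hn : 1 ≤ n)
    (ω : ℝ → ℝ) (hω : IsModulus ω) :
    MemXomega k ω (fun t => ω (Metric.infDist t (grid k n))) ∧
    (∀ p ∈ grid k n, ω (Metric.infDist p (grid k n)) = 0) ∧
    (⨆ t : cube k, |ω (Metric.infDist t.1 (grid k n))|)
      = ω (Real.sqrt k / (2 * n)) := by
  refine ⟨fun t _ s _ => hω.abs_sub_infDist_le _ t s,
    fun p hp => by rw [infDist_zero_of_mem hp, hω.1], ?_⟩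
  have hmax := (hω.monotoneOn.mono (image_subset_iff.2 fun _ _ => infDist_nonneg)).map_isGreatest
    (isGreatest_infDist_grid (k := k) hn)
  calc ⨆ t : cube k, |ω (infDist t.1 (grid k n))| = ⨆ t : cube k, ω (infDist t.1 (grid k n)) :=
        iSup_congr fun _ => abs_of_nonneg (hω.nonneg infDist_nonneg)
    _ = sSup (ω '' ((infDist · (grid k n)) '' cube k)) := by rw [image_image, image_eq_range]; rfl
    _ = ω (√k / (2 * n)) := hmax.csSup_eq

/-- The extremal function `φ(t) = ω(dist(t, G_n))` belongs to
`X_ω`, vanishes on the grid `G_n`, and has uniform norm exactly `ω(√k/(2n))` on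
the unit cube. -/
theorem extremal_function_properties
    (k n : ℕ) (hk : 1 ≤ k) (hn : 1 ≤ n)
    (ω : ℝ → ℝ) (hω : IsModulus ω) :
    MemXomega k ω (fun t => ω (Metric.infDist t (grid k n))) ∧
    (∀ p ∈ grid k n, ω (Metric.infDist p (grid k n)) = 0) ∧
    (⨆ t : cube k, |ω (Metric.infDist t.1 (grid k n))|)
      = ω (Real.sqrt k / (2 * n)) :=
  extremal_function_properties_general k n hn ω hω
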